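/- Let G be a connected graph on n vertices with normalized Laplacian L̃ = I − D^{−1/2} A D^{−1/2}, let λ be the second smallest eigenvalue of L̃, and let φ be the conductance of G. Then 2φ ≥ λ ≥ φ²/2. -/

import Mathlib

/-!
Substituting `x = D^{1/2} y` turns the quadratic form of `L̃ = D^{-1/2} (D - A) D^{-1/2}` into the
Dirichlet energy `y ⬝ L y = ½ ∑_{u ~ v} (y u - y v)²` and `x ⬝ x` into `∑ d_v y_v²`. As `G` is
connected, the kernel of `L̃` is spanned by `D^{1/2} 𝟙`, so `λ` is the minimum of the Rayleigh
quotient `y ⬝ L y / ∑ d_v y_v²` over the `y` with `∑ d_v y_v = 0`, attained at some `g` with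
`L g = λ D g`.

For `λ ≤ 2φ`, the test vector `𝟙_S - vol S / vol V` has quotient at most `2 cut S / vol S`.
For `φ² ≤ 2λ`, replace `g` by `-g` if needed so that `vol {g > 0} ≤ vol V / 2` and let `h = g⁺`.
Then `h ⬝ L h ≤ λ ∑ d h²`; every level set of `h²` has conductance at least `φ`, so summing over
the level sets gives `φ ∑ d h² ≤ ½ ∑_{u ~ v} |h_u² - h_v²|`; and by Cauchy–Schwarz the square of
the right side is at most `2 (h ⬝ L h) ∑ d h²`.
-/

open Finset Matrix

namespace Matrix.IsHermitian

variable {ι : Type*} [Fintype ι] [DecidableEq ι] {M : Matrix ι ι ℝ} (hM : M.IsHermitian)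

lemma dotProduct_eigenvectorBasis (i j : ι) :
    ⇑(hM.eigenvectorBasis i) ⬝ᵥ ⇑(hM.eigenvectorBasis j) = if i = j then 1 else 0 := by
  rw [← orthonormal_iff_ite.mp hM.eigenvectorBasis.orthonormal i j,
    EuclideanSpace.inner_eq_star_dotProduct, star_trivial, dotProduct_comm]

lemma sum_eigenvectorBasis_dotProduct_mul (x y : ι → ℝ) :
    ∑ i, (⇑(hM.eigenvectorBasis i) ⬝ᵥ x) * (⇑(hM.eigenvectorBasis i) ⬝ᵥ y) =
      x ⬝ᵥ y := by
  have := hM.eigenvectorBasis.sum_inner_mul_inner (WithLp.toLp 2 x) (WithLp.toLp 2 y)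
  simp only [EuclideanSpace.inner_eq_star_dotProduct, star_trivial] at this
  simpa [dotProduct_comm] using this

lemma eigenvectorBasis_dotProduct_mulVec (i : ι) (x : ι → ℝ) :
    ⇑(hM.eigenvectorBasis i) ⬝ᵥ (M *ᵥ x) =
      hM.eigenvalues i * (⇑(hM.eigenvectorBasis i) ⬝ᵥ x) := by
  rw [dotProduct_mulVec, ← mulVec_transpose, ← conjTranspose_eq_transpose_of_trivial, hM.eq,
    mulVec_eigenvectorBasis, smul_dotProduct, smul_eq_mul]

variable {n : ℕ} {A : Matrix (Fin n) (Fin n) ℝ} (hA : A.IsHermitian)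

lemma eigenvalues_sort_mul_dotProduct_le (k : Fin n) {x : Fin n → ℝ}
    (hx : ∀ j < k, ⇑(hA.eigenvectorBasis (Tuple.sort hA.eigenvalues j)) ⬝ᵥ x = 0) :
    hA.eigenvalues (Tuple.sort hA.eigenvalues k) * (x ⬝ᵥ x) ≤ x ⬝ᵥ (A *ᵥ x) := by
  set σ := Tuple.sort hA.eigenvalues
  rw [← hA.sum_eigenvectorBasis_dotProduct_mul x x,
    ← hA.sum_eigenvectorBasis_dotProduct_mul x (A *ᵥ x), mul_sum]
  refine (Equiv.sum_comp σ _).symm.trans_le (le_of_le_of_eq ?_ (Equiv.sum_comp σ _))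
  refine sum_le_sum fun j _ => ?_
  rw [eigenvectorBasis_dotProduct_mulVec]
  rcases lt_or_ge j k with hj | hj
  · simp [hx j hj]
  · have hμ : hA.eigenvalues (σ k) ≤ hA.eigenvalues (σ j) := Tuple.monotone_sort hA.eigenvalues hj
    nlinarith [mul_self_nonneg (⇑(hA.eigenvectorBasis (σ j)) ⬝ᵥ x)]

end Matrix.IsHermitian

lemma Matrix.PosSemidef.eigenvalues_sort_zero_eq_zero {n : ℕ} {A : Matrix (Fin n) (Fin n) ℝ}
    (hA : A.PosSemidef) (hdet : A.det = 0) (h0 : 0 < n) :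
    hA.isHermitian.eigenvalues (Tuple.sort hA.isHermitian.eigenvalues ⟨0, h0⟩) = 0 := by
  obtain ⟨i, -, hi⟩ := prod_eq_zero_iff.mp (hA.isHermitian.det_eq_prod_eigenvalues ▸ hdet)
  refine le_antisymm ?_ (hA.eigenvalues_nonneg _)
  have := Tuple.monotone_sort hA.isHermitian.eigenvalues
    (show ⟨0, h0⟩ ≤ (Tuple.sort hA.isHermitian.eigenvalues).symm i from Nat.zero_le _)
  rw [RCLike.ofReal_eq_zero] at hi
  simpa [hi] using this

lemma Matrix.PosSemidef.exists_eigenvectorBasis_sort_zero_eq_smul {n : ℕ}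
    {A : Matrix (Fin n) (Fin n) ℝ} (hA : A.PosSemidef) (h0 : 0 < n) {w : Fin n → ℝ}
    (hw : w ≠ 0) (hAw : A *ᵥ w = 0) (hker : ∀ x, A *ᵥ x = 0 → ∃ c : ℝ, x = c • w) :
    ∃ c : ℝ, c ≠ 0 ∧ ⇑(hA.isHermitian.eigenvectorBasis
      (Tuple.sort hA.isHermitian.eigenvalues ⟨0, h0⟩)) = c • w := by
  have hdet : A.det = 0 := exists_mulVec_eq_zero_iff.mp ⟨w, hw, hAw⟩
  obtain ⟨c, hc⟩ := hker _ <| by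
    rw [hA.isHermitian.mulVec_eigenvectorBasis, hA.eigenvalues_sort_zero_eq_zero hdet h0, zero_smul]
  refine ⟨c, ?_, hc⟩
  rintro rfl
  set i₀ := Tuple.sort hA.isHermitian.eigenvalues ⟨0, h0⟩
  have := hA.isHermitian.dotProduct_eigenvectorBasis i₀ i₀
  simp [hc] at this

namespace SimpleGraph

variable {V : Type*} [Fintype V] (G : SimpleGraph V) [DecidableRel G.Adj]

noncomputable def vol (S : Finset V) : ℝ := ∑ v ∈ S, (G.degree v : ℝ)

lemma vol_nonneg (S : Finset V) : 0 ≤ G.vol S :=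
  sum_nonneg fun _ _ => Nat.cast_nonneg _

lemma vol_pos (hdeg : ∀ v, 0 < G.degree v) {S : Finset V} (hS : S.Nonempty) : 0 < G.vol S :=
  sum_pos (fun v _ => Nat.cast_pos.mpr (hdeg v)) hS

lemma sqrt_degree_ne_zero (hdeg : ∀ v, 0 < G.degree v) (v : V) : √(G.degree v : ℝ) ≠ 0 :=
  (Real.sqrt_pos.mpr (Nat.cast_pos.mpr (hdeg v))).ne'

lemma sum_sum_adj_ite_left (f : V → ℝ) :
    ∑ u, ∑ v, (if G.Adj u v then f u else 0) = ∑ u, G.degree u * f u := by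
  refine sum_congr rfl fun u _ => ?_
  rw [G.degree_eq_sum_if_adj (R := ℝ) u, sum_mul]
  exact sum_congr rfl fun v _ => by split_ifs <;> simp

lemma sum_sum_adj_ite_right (f : V → ℝ) :
    ∑ u, ∑ v, (if G.Adj u v then f v else 0) = ∑ v, G.degree v * f v := by
  rw [sum_comm, ← sum_sum_adj_ite_left]
  simp_rw [G.adj_comm]

lemma exists_pos_of_sum_degree_mul_eq_zero (hdeg : ∀ v, 0 < G.degree v) {g : V → ℝ}
    (hg : g ≠ 0) (hsum : ∑ v, G.degree v * g v = 0) : ∃ v, 0 < g v := by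
  by_contra! h
  refine hg (funext fun v => ?_)
  have hterm := (sum_eq_zero_iff_of_nonpos fun u _ =>
    mul_nonpos_of_nonneg_of_nonpos (Nat.cast_nonneg _) (h u)).mp hsum v (mem_univ v)
  simpa [(hdeg v).ne'] using hterm

variable [DecidableEq V]

noncomputable def cut (S : Finset V) : ℝ :=
  ∑ u ∈ S, ∑ v ∈ Sᶜ, if G.Adj u v then (1 : ℝ) else 0

noncomputable def conductance : ℝ :=
  sInf {x : ℝ | ∃ S : Finset V, S.Nonempty ∧ G.vol S ≤ G.vol univ / 2 ∧
    x = G.cut S / G.vol S}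

lemma cut_nonneg (S : Finset V) : 0 ≤ G.cut S :=
  sum_nonneg fun _ _ => sum_nonneg fun _ _ => by split_ifs <;> norm_num

lemma conductance_nonneg : 0 ≤ G.conductance :=
  Real.sInf_nonneg <| by
    rintro _ ⟨S, -, -, rfl⟩
    exact div_nonneg (G.cut_nonneg S) (G.vol_nonneg S)

lemma conductance_mul_vol_le_cut {S : Finset V} (hS : G.vol S ≤ G.vol univ / 2) :
    G.conductance * G.vol S ≤ G.cut S := by
  rcases (G.vol_nonneg S).eq_or_lt with h0 | hpos
  · simpa [← h0] using G.cut_nonneg S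
  have hne : S.Nonempty := nonempty_of_sum_ne_zero hpos.ne'
  rw [← le_div_iff₀ hpos]
  refine csInf_le ⟨0, ?_⟩ ⟨S, hne, hS, rfl⟩
  rintro _ ⟨T, -, -, rfl⟩
  exact div_nonneg (G.cut_nonneg T) (G.vol_nonneg T)

lemma le_conductance [Nontrivial V] (hdeg : ∀ v, 0 < G.degree v) {c : ℝ}
    (h : ∀ S : Finset V, S.Nonempty → G.vol S ≤ G.vol univ / 2 → c * G.vol S ≤ G.cut S) :
    c ≤ G.conductance := by
  obtain ⟨v₀, -, hmin⟩ := exists_min_image univ (fun v => G.degree v) univ_nonempty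
  obtain ⟨v₁, hv₁⟩ := exists_ne v₀
  have hsingle : G.vol {v₀} ≤ G.vol univ / 2 := by
    have hpair : G.vol {v₀, v₁} ≤ G.vol univ :=
      sum_le_sum_of_subset_of_nonneg (subset_univ _) fun _ _ _ => Nat.cast_nonneg _
    have hle : (G.degree v₀ : ℝ) ≤ G.degree v₁ := Nat.cast_le.mpr (hmin v₁ (mem_univ _))
    simp only [vol, sum_singleton, sum_pair hv₁.symm] at hpair ⊢
    linarith
  refine le_csInf ⟨_, {v₀}, singleton_nonempty v₀, hsingle, rfl⟩ ?_
  rintro _ ⟨S, hne, hS, rfl⟩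
  exact (le_div_iff₀ (G.vol_pos hdeg hne)).mpr (h S hne hS)

lemma dotProduct_mulVec_lapMatrix (x : V → ℝ) :
    x ⬝ᵥ (G.lapMatrix ℝ *ᵥ x) =
      (∑ u, ∑ v, if G.Adj u v then (x u - x v) ^ 2 else 0) / 2 := by
  rw [← lapMatrix_toLinearMap₂', toLinearMap₂'_apply']

lemma sum_adj_indicator_sub_sq (S : Finset V) :
    ∑ u, ∑ v, (if G.Adj u v then
      ((if u ∈ S then (1 : ℝ) else 0) - if v ∈ S then 1 else 0) ^ 2 else 0) =
      2 * G.cut S := by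
  have key : ∀ u v, (if G.Adj u v then
      ((if u ∈ S then (1 : ℝ) else 0) - if v ∈ S then 1 else 0) ^ 2 else 0) =
      (if u ∈ S then if v ∈ Sᶜ then if G.Adj u v then 1 else 0 else 0 else 0) +
      (if v ∈ S then if u ∈ Sᶜ then if G.Adj v u then 1 else 0 else 0 else 0) := by
    intro u v
    by_cases hu : u ∈ S <;> by_cases hv : v ∈ S <;> by_cases h : G.Adj u v <;>
      simp [hu, hv, h, G.adj_comm v u]
  simp_rw [key, sum_add_distrib]
  rw [sum_comm (s := univ) (t := univ) (f := fun u v => if v ∈ S then _ else _)]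
  simp only [sum_ite_irrel, sum_const_zero, sum_ite_mem, univ_inter]
  rw [cut]
  ring

-- Cauchy–Schwarz over the adjacent pairs, with `|a² - b²| = |a - b| |a + b|` and
-- `(a + b)² ≤ 2a² + 2b²`.
lemma sq_half_sum_adj_abs_sq_sub_sq_le (x : V → ℝ) :
    ((∑ u, ∑ v, if G.Adj u v then |x u ^ 2 - x v ^ 2| else 0) / 2) ^ 2 ≤
      2 * (x ⬝ᵥ (G.lapMatrix ℝ *ᵥ x)) * ∑ v, G.degree v * x v ^ 2 := by
  set P := univ.filter fun p : V × V => G.Adj p.1 p.2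
  have hP (f : V → V → ℝ) :
      ∑ u, ∑ v, (if G.Adj u v then f u v else 0) = ∑ p ∈ P, f p.1 p.2 := by
    rw [sum_filter, Fintype.sum_prod_type' fun u v => if G.Adj u v then f u v else 0]
  have hCS := sum_mul_sq_le_sq_mul_sq P (fun p => |x p.1 - x p.2|) (fun p => |x p.1 + x p.2|)
  have hplus : ∑ p ∈ P, (x p.1 + x p.2) ^ 2 ≤ 4 * ∑ v, G.degree v * x v ^ 2 := by
    calc ∑ p ∈ P, (x p.1 + x p.2) ^ 2 ≤ ∑ p ∈ P, (2 * x p.1 ^ 2 + 2 * x p.2 ^ 2) :=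
          sum_le_sum fun p _ => by nlinarith [sq_nonneg (x p.1 - x p.2)]
      _ = 4 * ∑ v, G.degree v * x v ^ 2 := by
          rw [sum_add_distrib, ← hP fun u _ => 2 * x u ^ 2, ← hP fun _ v => 2 * x v ^ 2,
            sum_sum_adj_ite_left, sum_sum_adj_ite_right, ← sum_add_distrib, mul_sum]
          exact sum_congr rfl fun _ _ => by ring
  have habs : ∀ p : V × V, |x p.1 ^ 2 - x p.2 ^ 2| = |x p.1 - x p.2| * |x p.1 + x p.2| :=
    fun p => by rw [← abs_mul, sq_sub_sq, mul_comm]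
  rw [dotProduct_mulVec_lapMatrix, hP, hP, sum_congr rfl fun p _ => habs p]
  simp only [sq_abs] at hCS
  have hnn : 0 ≤ ∑ p ∈ P, (x p.1 - x p.2) ^ 2 := sum_nonneg fun _ _ => sq_nonneg _
  nlinarith [mul_le_mul_of_nonneg_left hplus hnn]

-- `g⁺ * (g - g⁺) = 0` pointwise, and `L` has nonpositive off-diagonal entries.
lemma dotProduct_mulVec_lapMatrix_posPart_le (g : V → ℝ) :
    g⁺ ⬝ᵥ (G.lapMatrix ℝ *ᵥ g⁺) ≤ g⁺ ⬝ᵥ (G.lapMatrix ℝ *ᵥ g) := by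
  have hg : ∀ v, g⁺ v = max (g v) 0 := fun v => rfl
  rw [← sub_nonneg, ← dotProduct_sub, ← mulVec_sub]
  simp only [dotProduct, lapMatrix_mulVec_apply]
  refine sum_nonneg fun v _ => ?_
  have hcompl : g⁺ v * (g - g⁺) v = 0 := by
    simp only [Pi.sub_apply, hg]
    rcases le_total (g v) 0 with h | h <;> simp [h]
  have hnbr : ∑ u ∈ G.neighborFinset v, (g - g⁺) u ≤ 0 :=
    sum_nonpos fun u _ => by simp only [Pi.sub_apply, hg]; linarith [le_max_left (g u) 0]
  nlinarith [le_max_right (g v) 0, hg v]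

lemma sum_adj_abs_sub_add_mul_indicator {S : Finset V} {F : V → ℝ} (hF : ∀ v, 0 ≤ F v)
    (hFS : ∀ v ∉ S, F v = 0) {m : ℝ} (hm : 0 ≤ m) :
    (∑ u, ∑ v, if G.Adj u v then
      |(F u + m * if u ∈ S then 1 else 0) - (F v + m * if v ∈ S then 1 else 0)| else 0) =
      (∑ u, ∑ v, if G.Adj u v then |F u - F v| else 0) + m * (2 * G.cut S) := by
  rw [← G.sum_adj_indicator_sub_sq S, mul_sum, ← sum_add_distrib]
  refine sum_congr rfl fun u _ => ?_
  rw [mul_sum, ← sum_add_distrib]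
  refine sum_congr rfl fun v _ => ?_
  by_cases h : G.Adj u v
  · by_cases hu : u ∈ S <;> by_cases hv : v ∈ S
    · simp [h, hu, hv]
    · simp [h, hu, hv, hFS v hv, abs_of_nonneg (hF u), abs_of_nonneg (add_nonneg (hF u) hm)]
    · rw [abs_sub_comm, abs_sub_comm (F u)]
      simp [h, hu, hv, hFS u hu, abs_of_nonneg (hF v), abs_of_nonneg (add_nonneg (hF v) hm)]
    · simp [h, hu, hv]
  · simp [h]

-- Induction on the support: lowering `F` on its support `S` by its minimum `m` lowers the left
-- side by `c * m * vol S` and the right side by `m * cut S`, and shrinks the support.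
lemma mul_sum_degree_mul_le_of_forall_cut {c : ℝ} (F : V → ℝ) (hF : ∀ v, 0 ≤ F v)
    (hcut : ∀ S : Finset V, (∀ v ∈ S, 0 < F v) → c * G.vol S ≤ G.cut S) :
    c * ∑ v, G.degree v * F v ≤ (∑ u, ∑ v, if G.Adj u v then |F u - F v| else 0) / 2 := by
  induction hk : #{v | 0 < F v} using Nat.strong_induction_on generalizing F with
  | _ k ih =>
  set S : Finset V := {v | 0 < F v} with hS
  have hmemS : ∀ v, v ∈ S ↔ 0 < F v := fun v => by simp [hS]
  have hout : ∀ v ∉ S, F v = 0 := fun v hv =>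
    le_antisymm (not_lt.mp ((hmemS v).not.mp hv)) (hF v)
  rcases S.eq_empty_or_nonempty with hempty | hne
  · simp [fun v => hout v (hempty ▸ notMem_empty v)]
  obtain ⟨v₀, hv₀, hmin⟩ := S.exists_min_image F hne
  set m := F v₀
  have hm : 0 ≤ m := hF v₀
  set F' : V → ℝ := fun v => if v ∈ S then F v - m else 0
  have hF' : ∀ v, 0 ≤ F' v := fun v => by
    by_cases hv : v ∈ S <;> simp [F', hv, hmin v]
  have hout' : ∀ v ∉ S, F' v = 0 := fun v hv => by simp [F', hv]
  have hFF' : ∀ v, F v = F' v + m * if v ∈ S then 1 else 0 := fun v => by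
    by_cases hv : v ∈ S <;> simp [F', hv, hout]
  have hsub : ({v | 0 < F' v} : Finset V) ⊂ S := by
    refine ssubset_of_subset_of_ne (fun v hv => ?_) fun heq => ?_
    · by_contra hvS
      simp [hout' v hvS] at hv
    · have : v₀ ∈ ({v | 0 < F' v} : Finset V) := heq ▸ hv₀
      simp [F', hv₀, m] at this
  have IH := ih _ (hk ▸ card_lt_card hsub) F' hF'
    (fun T hT => hcut T fun v hv => (hmemS v).mp (hsub.subset (by simpa using hT v hv))) rfl
  have hvol : ∑ v, G.degree v * F v = ∑ v, G.degree v * F' v + m * G.vol S := by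
    simp only [hFF', mul_add, sum_add_distrib, vol, mul_sum]
    simp [mul_comm]
  have hsplit : (∑ u, ∑ v, if G.Adj u v then |F u - F v| else 0) =
      (∑ u, ∑ v, if G.Adj u v then |F' u - F' v| else 0) + m * (2 * G.cut S) := by
    simp only [hFF']
    exact G.sum_adj_abs_sub_add_mul_indicator hF' hout' hm
  have hcutS := mul_le_mul_of_nonneg_left (hcut S fun v => (hmemS v).mp) hm
  rw [hvol, hsplit]
  linarith

lemma sq_conductance_div_two_le_of_vol_pos_le (hdeg : ∀ v, 0 < G.degree v) {lam : ℝ}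
    {g : V → ℝ} (heig : ∀ v, (G.lapMatrix ℝ *ᵥ g) v = lam * (G.degree v * g v))
    (hpos : ∃ v, 0 < g v)
    (hvol : G.vol {v | 0 < g v} ≤ G.vol univ / 2) :
    G.conductance ^ 2 / 2 ≤ lam := by
  have hg : ∀ v, g⁺ v = max (g v) 0 := fun v => rfl
  set M := ∑ v, G.degree v * g⁺ v ^ 2
  have hM : 0 < M := by
    obtain ⟨v, hv⟩ := hpos
    refine sum_pos' (fun u _ => by positivity) ⟨v, mem_univ v, ?_⟩
    rw [hg, max_eq_left hv.le]
    exact mul_pos (Nat.cast_pos.mpr (hdeg v)) (by positivity)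
  have hQ : g⁺ ⬝ᵥ (G.lapMatrix ℝ *ᵥ g⁺) ≤ lam * M := by
    refine (G.dotProduct_mulVec_lapMatrix_posPart_le g).trans_eq ?_
    simp only [dotProduct, heig, M, mul_sum]
    refine sum_congr rfl fun v _ => ?_
    rw [hg]
    rcases le_total (g v) 0 with h | h
    · simp [h]
    · simp [h]; ring
  have hsweep : G.conductance * M ≤
      (∑ u, ∑ v, if G.Adj u v then |g⁺ u ^ 2 - g⁺ v ^ 2| else 0) / 2 := by
    refine G.mul_sum_degree_mul_le_of_forall_cut (fun v => g⁺ v ^ 2) (fun v => sq_nonneg _)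
      fun S hS => G.conductance_mul_vol_le_cut (le_trans ?_ hvol)
    refine sum_le_sum_of_subset_of_nonneg (fun v hv => ?_) fun _ _ _ => Nat.cast_nonneg _
    have := hS v hv
    simp only [mem_filter, mem_univ, true_and]
    by_contra h
    rw [hg, max_eq_right (not_lt.mp h)] at this
    simp at this
  have hφM : G.conductance ^ 2 * M ^ 2 ≤ 2 * lam * M ^ 2 :=
    calc G.conductance ^ 2 * M ^ 2 = (G.conductance * M) ^ 2 := by ring
      _ ≤ ((∑ u, ∑ v, if G.Adj u v then |g⁺ u ^ 2 - g⁺ v ^ 2| else 0) / 2) ^ 2 :=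
        pow_le_pow_left₀ (mul_nonneg G.conductance_nonneg hM.le) hsweep 2
      _ ≤ 2 * (g⁺ ⬝ᵥ (G.lapMatrix ℝ *ᵥ g⁺)) * M :=
        G.sq_half_sum_adj_abs_sq_sub_sq_le g⁺
      _ ≤ 2 * (lam * M) * M := by gcongr
      _ = 2 * lam * M ^ 2 := by ring
  linarith [le_of_mul_le_mul_right hφM (pow_pos hM 2)]

lemma sq_conductance_div_two_le (hdeg : ∀ v, 0 < G.degree v) {lam : ℝ} {g : V → ℝ}
    (hg : g ≠ 0) (hsum : ∑ v, G.degree v * g v = 0)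
    (heig : ∀ v, (G.lapMatrix ℝ *ᵥ g) v = lam * (G.degree v * g v)) :
    G.conductance ^ 2 / 2 ≤ lam := by
  have hsplit : G.vol {v | 0 < g v} + G.vol {v | 0 < (-g) v} ≤ G.vol univ := by
    rw [vol, vol, ← sum_union (disjoint_filter.mpr fun v _ h => by simp; linarith)]
    exact sum_le_sum_of_subset_of_nonneg (subset_univ _) fun _ _ _ => Nat.cast_nonneg _
  rcases le_total (G.vol {v | 0 < g v}) (G.vol univ / 2) with h | h
  · exact G.sq_conductance_div_two_le_of_vol_pos_le hdeg heig
      (G.exists_pos_of_sum_degree_mul_eq_zero hdeg hg hsum) h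
  · refine G.sq_conductance_div_two_le_of_vol_pos_le hdeg (g := -g) (fun v => ?_)
      (G.exists_pos_of_sum_degree_mul_eq_zero hdeg (neg_ne_zero.mpr hg) ?_) (by linarith)
    · simp [mulVec_neg, heig]
    · simp [hsum]

lemma le_two_mul_conductance [Nontrivial V] (hdeg : ∀ v, 0 < G.degree v) {lam : ℝ}
    (hray : ∀ y : V → ℝ, ∑ v, G.degree v * y v = 0 →
      lam * ∑ v, G.degree v * y v ^ 2 ≤ y ⬝ᵥ (G.lapMatrix ℝ *ᵥ y)) :
    lam ≤ 2 * G.conductance := by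
  rcases le_or_gt lam 0 with hlam | hlam
  · linarith [G.conductance_nonneg]
  suffices lam / 2 ≤ G.conductance by linarith
  refine G.le_conductance hdeg fun S hne hS => ?_
  have hU : 0 < G.vol univ := G.vol_pos hdeg univ_nonempty
  set c := G.vol S / G.vol univ
  have hc : c ≤ 1 / 2 := by rw [div_le_iff₀ hU]; linarith
  have hcU : G.vol univ * c = G.vol S := mul_div_cancel₀ _ hU.ne'
  set y : V → ℝ := fun v => (if v ∈ S then 1 else 0) - c
  have hind : ∑ v, G.degree v * (if v ∈ S then (1 : ℝ) else 0) = G.vol S := by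
    simp [vol]
  have hsum : ∑ v, G.degree v * y v = 0 := by
    simp only [y, mul_sub, sum_sub_distrib, hind, ← sum_mul]
    rw [← vol, hcU, sub_self]
  have hsq : ∑ v, G.degree v * y v ^ 2 = G.vol S * (1 - c) := by
    have hy : ∀ v, y v ^ 2 = (if v ∈ S then 1 else 0) * (1 - 2 * c) + c ^ 2 := fun v => by
      by_cases hv : v ∈ S <;> simp only [y, hv, if_true, if_false] <;> ring
    simp only [hy, mul_add, sum_add_distrib, ← mul_assoc, ← sum_mul, hind]
    rw [← vol]
    linear_combination c * hcU
  have hquad : y ⬝ᵥ (G.lapMatrix ℝ *ᵥ y) = G.cut S := by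
    have := G.sum_adj_indicator_sub_sq S
    rw [dotProduct_mulVec_lapMatrix]
    simp only [y, sub_sub_sub_cancel_right]
    linarith
  have := hray y hsum
  rw [hsq, hquad] at this
  nlinarith [mul_nonneg (mul_nonneg hlam.le (G.vol_nonneg S)) (by linarith : 0 ≤ 1 / 2 - c)]

noncomputable def normLapMatrix : Matrix V V ℝ :=
  Matrix.of fun i j =>
    if i = j then 1
    else if G.Adj i j then -(1 / Real.sqrt ((G.degree i : ℝ) * (G.degree j : ℝ)))
    else 0

lemma normLapMatrix_eq (hdeg : ∀ v, 0 < G.degree v) :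
    G.normLapMatrix = diagonal (fun v => (√(G.degree v : ℝ))⁻¹) * G.lapMatrix ℝ *
      diagonal (fun v => (√(G.degree v : ℝ))⁻¹) := by
  ext i j
  have hd : ∀ v, (0 : ℝ) < G.degree v := fun v => Nat.cast_pos.mpr (hdeg v)
  simp only [normLapMatrix, of_apply, diagonal_mul, mul_diagonal, lapMatrix, degMatrix,
    Matrix.sub_apply, diagonal_apply, adjMatrix_apply]
  by_cases hij : i = j
  · subst hij
    have := Real.sq_sqrt (hd i).le
    have := (Real.sqrt_pos.mpr (hd i)).ne'
    simp only [if_true, G.irrefl, if_false, sub_zero]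
    field_simp
    linarith
  · by_cases hadj : G.Adj i j
    · simp [hij, hadj, Real.sqrt_mul (hd i).le, mul_comm]
    · simp [hij, hadj]

lemma normLapMatrix_mulVec (hdeg : ∀ v, 0 < G.degree v) (x : V → ℝ) (v : V) :
    (G.normLapMatrix *ᵥ x) v =
      (√(G.degree v : ℝ))⁻¹ *
        (G.lapMatrix ℝ *ᵥ fun u => (√(G.degree u : ℝ))⁻¹ * x u) v := by
  have hdiag (z : V → ℝ) : diagonal (fun u => (√(G.degree u : ℝ))⁻¹) *ᵥ z =
      fun u => (√(G.degree u : ℝ))⁻¹ * z u := funext fun u => mulVec_diagonal _ _ u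
  rw [G.normLapMatrix_eq hdeg, ← mulVec_mulVec, ← mulVec_mulVec, hdiag, hdiag]

lemma dotProduct_mulVec_normLapMatrix (hdeg : ∀ v, 0 < G.degree v) (y : V → ℝ) :
    (fun v => √(G.degree v : ℝ) * y v) ⬝ᵥ
        (G.normLapMatrix *ᵥ fun v => √(G.degree v : ℝ) * y v) =
      y ⬝ᵥ (G.lapMatrix ℝ *ᵥ y) := by
  have hsqrt := G.sqrt_degree_ne_zero hdeg
  have hy : (fun u => (√(G.degree u : ℝ))⁻¹ * (√(G.degree u : ℝ) * y u)) = y :=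
    funext fun u => inv_mul_cancel_left₀ (hsqrt u) _
  simp only [dotProduct, G.normLapMatrix_mulVec hdeg, hy]
  refine sum_congr rfl fun v _ => ?_
  field_simp [hsqrt v]

lemma posSemidef_normLapMatrix (hdeg : ∀ v, 0 < G.degree v) : G.normLapMatrix.PosSemidef := by
  have := (posSemidef_lapMatrix ℝ G).conjTranspose_mul_mul_same
    (diagonal fun v => (√(G.degree v : ℝ))⁻¹)
  rwa [diagonal_conjTranspose, star_trivial, ← G.normLapMatrix_eq hdeg] at this

lemma normLapMatrix_mulVec_sqrt_degree (hdeg : ∀ v, 0 < G.degree v) :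
    G.normLapMatrix *ᵥ (fun v => √(G.degree v : ℝ)) = 0 := by
  have hone : (fun u => (√(G.degree u : ℝ))⁻¹ * √(G.degree u : ℝ)) = fun _ => 1 :=
    funext fun u => inv_mul_cancel₀ (G.sqrt_degree_ne_zero hdeg u)
  funext v
  rw [G.normLapMatrix_mulVec hdeg, hone, lapMatrix_mulVec_const_eq_zero]
  simp

lemma exists_eq_smul_sqrt_degree_of_normLapMatrix_mulVec_eq_zero (hconn : G.Connected)
    (hdeg : ∀ v, 0 < G.degree v) {x : V → ℝ} (hx : G.normLapMatrix *ᵥ x = 0) :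
    ∃ c : ℝ, x = c • fun v => √(G.degree v : ℝ) := by
  have hsqrt := G.sqrt_degree_ne_zero hdeg
  set z : V → ℝ := fun u => (√(G.degree u : ℝ))⁻¹ * x u
  have hz : G.lapMatrix ℝ *ᵥ z = 0 := funext fun v => by
    simpa [G.normLapMatrix_mulVec hdeg, hsqrt v] using congrFun hx v
  obtain ⟨v₀⟩ := hconn.nonempty
  refine ⟨z v₀, funext fun v => ?_⟩
  have hzv : z v = z v₀ :=
    G.lapMatrix_mulVec_eq_zero_iff_forall_reachable.mp hz v v₀ (hconn.preconnected v v₀)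
  rw [Pi.smul_apply, smul_eq_mul, ← hzv, mul_comm, mul_inv_cancel_left₀ (hsqrt v)]

end SimpleGraph

namespace SimpleGraph

variable {n : ℕ} (G : SimpleGraph (Fin n)) [DecidableRel G.Adj]

lemma exists_normLapMatrix_eigenvectorBasis_sort_zero_eq_smul (hconn : G.Connected)
    (hdeg : ∀ v, 0 < G.degree v) (hsym : G.normLapMatrix.IsHermitian) (h0 : 0 < n) :
    ∃ c : ℝ, c ≠ 0 ∧ ⇑(hsym.eigenvectorBasis (Tuple.sort hsym.eigenvalues ⟨0, h0⟩)) =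
      c • fun v => √(G.degree v : ℝ) :=
  (G.posSemidef_normLapMatrix hdeg).exists_eigenvectorBasis_sort_zero_eq_smul h0
    (fun h => G.sqrt_degree_ne_zero hdeg ⟨0, h0⟩ (congrFun h _))
    (G.normLapMatrix_mulVec_sqrt_degree hdeg)
    fun _ hx => G.exists_eq_smul_sqrt_degree_of_normLapMatrix_mulVec_eq_zero hconn hdeg hx

lemma eigenvalues_sort_one_mul_le (hconn : G.Connected) (hdeg : ∀ v, 0 < G.degree v)
    (hsym : G.normLapMatrix.IsHermitian) (hn : 1 < n) {y : Fin n → ℝ}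
    (hy : ∑ v, G.degree v * y v = 0) :
    hsym.eigenvalues (Tuple.sort hsym.eigenvalues ⟨1, hn⟩) * ∑ v, G.degree v * y v ^ 2 ≤
      y ⬝ᵥ (G.lapMatrix ℝ *ᵥ y) := by
  obtain ⟨c, -, hc⟩ := G.exists_normLapMatrix_eigenvectorBasis_sort_zero_eq_smul hconn hdeg hsym
    (by omega)
  set x : Fin n → ℝ := fun v => √(G.degree v : ℝ) * y v
  have hsq : ∀ v, √(G.degree v : ℝ) * √(G.degree v : ℝ) = G.degree v :=
    fun v => Real.mul_self_sqrt (Nat.cast_nonneg _)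
  have hx : ∀ j < (⟨1, hn⟩ : Fin n),
      ⇑(hsym.eigenvectorBasis (Tuple.sort hsym.eigenvalues j)) ⬝ᵥ x = 0 := by
    intro j hj
    rw [show j = ⟨0, by omega⟩ from Fin.ext (by simpa [Fin.lt_def] using hj)]
    rw [hc, smul_dotProduct]
    simp only [dotProduct, x, ← mul_assoc, hsq, hy, smul_zero]
  have hxx : x ⬝ᵥ x = ∑ v, G.degree v * y v ^ 2 :=
    sum_congr rfl fun v _ => by rw [← hsq]; ring
  rw [← hxx, ← G.dotProduct_mulVec_normLapMatrix hdeg]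
  exact hsym.eigenvalues_sort_mul_dotProduct_le _ hx

lemma exists_lapMatrix_mulVec_eq_eigenvalues_sort_one (hconn : G.Connected)
    (hdeg : ∀ v, 0 < G.degree v) (hsym : G.normLapMatrix.IsHermitian) (hn : 1 < n) :
    ∃ g : Fin n → ℝ, g ≠ 0 ∧ ∑ v, G.degree v * g v = 0 ∧
      ∀ v, (G.lapMatrix ℝ *ᵥ g) v =
        hsym.eigenvalues (Tuple.sort hsym.eigenvalues ⟨1, hn⟩) * (G.degree v * g v) := by
  obtain ⟨c, hc0, hc⟩ :=
    G.exists_normLapMatrix_eigenvectorBasis_sort_zero_eq_smul hconn hdeg hsym (by omega)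
  set σ := Tuple.sort hsym.eigenvalues
  set f : Fin n → ℝ := ⇑(hsym.eigenvectorBasis (σ ⟨1, hn⟩))
  have hsqrt := G.sqrt_degree_ne_zero hdeg
  have hsq : ∀ v, √(G.degree v : ℝ) * √(G.degree v : ℝ) = G.degree v :=
    fun v => Real.mul_self_sqrt (Nat.cast_nonneg _)
  refine ⟨fun v => (√(G.degree v : ℝ))⁻¹ * f v, fun h => ?_, ?_, fun v => ?_⟩
  · have hf : f = 0 := funext fun v => by
      simpa [hsqrt v] using congrFun h v
    have : f ⬝ᵥ f = 1 := by
      simpa using hsym.dotProduct_eigenvectorBasis (σ ⟨1, hn⟩) (σ ⟨1, hn⟩)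
    simp [hf] at this
  · have horth := hsym.dotProduct_eigenvectorBasis (σ ⟨0, by omega⟩) (σ ⟨1, hn⟩)
    rw [if_neg (σ.injective.ne (by simp [Fin.ext_iff])), hc, smul_dotProduct, smul_eq_mul,
      mul_eq_zero] at horth
    refine Eq.trans (sum_congr rfl fun v _ => ?_) (horth.resolve_left hc0)
    rw [← hsq v]
    field_simp [hsqrt v]
    rfl
  · have heig := congrFun (hsym.mulVec_eigenvectorBasis (σ ⟨1, hn⟩)) v
    rw [G.normLapMatrix_mulVec hdeg, Pi.smul_apply, smul_eq_mul] at heig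
    rw [← hsq v]
    field_simp [hsqrt v] at heig ⊢
    linear_combination heig

end SimpleGraph

/-- Cheeger's inequality: for a connected graph `G` with normalized Laplacian
`L̃ = I − D^{-1/2} A D^{-1/2}`, second smallest eigenvalue `λ`, and conductance `φ`,
one has `2φ ≥ λ ≥ φ²/2`. -/
theorem cheeger_inequality (n : ℕ) (hn : 1 < n) (G : SimpleGraph (Fin n))
    [DecidableRel G.Adj] (hconn : G.Connected) (hdeg : ∀ v, 0 < G.degree v)
    (nL : Matrix (Fin n) (Fin n) ℝ)
    (hnL : nL = Matrix.of fun i j =>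
      if i = j then 1
      else if G.Adj i j then -(1 / Real.sqrt ((G.degree i : ℝ) * (G.degree j : ℝ)))
      else 0)
    (hsym : nL.IsHermitian)
    (lam : ℝ)
    (hlam : lam = hsym.eigenvalues (Tuple.sort hsym.eigenvalues ⟨1, hn⟩))
    (φ : ℝ)
    (hφ : φ = sInf {x : ℝ | ∃ S : Finset (Fin n), S.Nonempty ∧
      (∑ v ∈ S, (G.degree v : ℝ)) ≤ (∑ v : Fin n, (G.degree v : ℝ)) / 2 ∧
      x = (∑ u ∈ S, ∑ v ∈ Sᶜ, if G.Adj u v then (1 : ℝ) else 0) /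
        (∑ v ∈ S, (G.degree v : ℝ))}) :
    2 * φ ≥ lam ∧ lam ≥ φ^2 / 2 := by
  subst hnL hlam hφ
  have : Nontrivial (Fin n) := Fin.nontrivial_iff_two_le.mpr hn
  obtain ⟨g, hg, hsum, heig⟩ :=
    G.exists_lapMatrix_mulVec_eq_eigenvalues_sort_one hconn hdeg hsym hn
  exact ⟨G.le_two_mul_conductance hdeg fun _ hy =>
      G.eigenvalues_sort_one_mul_le hconn hdeg hsym hn hy,
    G.sq_conductance_div_two_le hdeg hg hsum heig⟩
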